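/- For every k ≥ 2, let m_k = 2^{k-⌈log₂ k⌉} − ⌈log₂ k⌉, let u_k = (∏_{j=0}^{k-2} bin_k(j) a^{m_k}) bin_k(k-1) where bin_k(j) ∈ {0,1}^{⌈log₂ k⌉} is the binary representation of j padded with leading zeros, and let s_k = (u_k a^{m_k+1})^{m_k} u_k over the alphabet {0,1,a}. Then g(s_k) ≤ C·k for some absolute constant C. -/

import Mathlib

/-- A straight-line program over alphabet `α`, in topologically-sorted form:
nonterminals are `Fin n`, each has exactly one nonempty right-hand side, and
right-hand sides only refer to strictly smaller nonterminals (acyclicity). -/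
structure SLP (α : Type) where
  n : ℕ
  rhs : Fin n → List (α ⊕ Fin n)
  rhs_ne : ∀ i, rhs i ≠ []
  acyc : ∀ i j, Sum.inr j ∈ rhs i → (j : ℕ) < (i : ℕ)
  start : Fin n

namespace SLP

variable {α : Type}

/-- The word produced by nonterminal `i`. -/
def valAux (G : SLP α) (i : Fin G.n) : List α :=
  (G.rhs i).attach.flatMap (fun s =>
    match s with
    | ⟨Sum.inl a, _⟩ => [a]
    | ⟨Sum.inr j, hj⟩ => G.valAux j)
termination_by (i : ℕ)
decreasing_by exact G.acyc i j hj

/-- The word produced by the SLP. -/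
def val (G : SLP α) : List α := G.valAux G.start

/-- The size of the SLP: sum of lengths of all right-hand sides. -/
def size (G : SLP α) : ℕ := ∑ i : Fin G.n, (G.rhs i).length

end SLP

/-- `g w`: the minimal size of an SLP producing `w`. -/
noncomputable def g {α : Type} (w : List α) : ℕ :=
  sInf { s | ∃ G : SLP α, G.size = s ∧ G.val = w }

-- The alphabet `{0, 1, a}` is modelled as `Fin 3`, with `a := (2 : Fin 3)`.
/-- `binpad L j` : the binary representation of `j`, padded with leading zeros to
`L` digits (most significant digit first), as a word over `{0,1} ⊆ Fin 3`. -/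
def binpad (L j : ℕ) : List (Fin 3) :=
  (List.range L).map (fun t => if Nat.testBit j (L - 1 - t) then (1 : Fin 3) else 0)

/-- `mk k = 2^{k - ⌈log₂ k⌉} - ⌈log₂ k⌉`. -/
def mk' (k : ℕ) : ℕ := 2 ^ (k - Nat.clog 2 k) - Nat.clog 2 k

/-- `uk k = (∏_{j=0}^{k-2} bin_k(j) a^{m_k}) bin_k(k-1)`. -/
def uk (k : ℕ) : List (Fin 3) :=
  ((List.range (k - 1)).map
      (fun j => binpad (Nat.clog 2 k) j ++ List.replicate (mk' k) 2)).flatten ++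
    binpad (Nat.clog 2 k) (k - 1)

/-- `sk k = (u_k a^{m_k+1})^{m_k} u_k`. -/
def sk (k : ℕ) : List (Fin 3) :=
  (List.replicate (mk' k) (uk k ++ List.replicate (mk' k + 1) 2)).flatten ++ uk k

/-!
All bounds come from three SLP constructions: a single rule (`g w ≤ |w|`), renaming terminals,
and plugging an SLP for `u` into the holes (`none`) of an SLP over `Option α`, which gives
`g (v.fillHoles u) ≤ g v + g u`. Hole filling yields `g (u ++ w) ≤ g u + g w + 2` and, via
`w ^ n = (#^n)[# := w]`, `g (w ^ n) ≤ g w + O(log n)`; since `s_k = (u_k a^{m_k+1})^{m_k} u_k`,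
it remains to show `g (u_k) = O(k)`.

Now `u_k` is the counter word `bin(0) # bin(1) # ⋯ # bin(k-1)` with its holes filled by
`a^{m_k}`. Splitting off the leading bit, the counter word on `L + 1` bits is `0` followed by
the counter word on `L` bits with separator `#0` (and, beyond `2^L`, a second block `1 ⋯` with
separator `#1`). Changing the separator `#` to `#0` is again a hole substitution, of cost 2, so
the counter word for `d + 1` numbers on `L` bits has an SLP of size `O(d + L)`.
-/

def List.fillHoles {α : Type} (v : List (Option α)) (u : List α) : List α :=
  v.flatMap (Option.elim · u pure)

namespace SLP

variable {α β : Type}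

theorem valAux_eq (G : SLP α) (i : Fin G.n) :
    G.valAux i = (G.rhs i).flatMap (Sum.elim pure G.valAux) := by
  rw [valAux, List.flatMap_subtype (g := Sum.elim pure G.valAux) (by rintro (a | j) _ <;> rfl),
    List.unattach_attach]

theorem acyc_induction (G : SLP α) {P : Fin G.n → Prop}
    (h : ∀ i, (∀ j, Sum.inr j ∈ G.rhs i → P j) → P i) (i : Fin G.n) : P i :=
  wellFounded_lt.induction i fun i ih => h i fun j hj => ih j (G.acyc i j hj)

theorem valAux_ne_nil (G : SLP α) (i : Fin G.n) : G.valAux i ≠ [] := by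
  induction i using G.acyc_induction with
  | h i ih =>
    obtain ⟨s, hs⟩ := List.exists_mem_of_ne_nil _ (G.rhs_ne i)
    rw [valAux_eq, Ne, List.flatMap_eq_nil_iff, not_forall]
    refine ⟨s, fun h => ?_⟩
    rcases s with a | j
    · exact List.cons_ne_nil _ _ (h hs)
    · exact ih j hs (h hs)

def ofWord (w : List α) (hw : w ≠ []) : SLP α where
  n := 1
  rhs _ := w.map Sum.inl
  rhs_ne _ := by simpa using hw
  acyc _ _ h := by simp at h
  start := 0

theorem val_ofWord (w : List α) (hw : w ≠ []) : (ofWord w hw).val = w := by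
  simp [val, valAux_eq, ofWord, List.flatMap_map]

theorem size_ofWord (w : List α) (hw : w ≠ []) : (ofWord w hw).size = w.length := by
  change ∑ _ : Fin 1, _ = _
  simp [ofWord]

def map (f : α → β) (G : SLP α) : SLP β where
  n := G.n
  rhs i := (G.rhs i).map (Sum.map f id)
  rhs_ne i := by simpa using G.rhs_ne i
  acyc i j h := by
    obtain ⟨a | j', hs, hj⟩ := List.mem_map.1 h
    · simp at hj
    · cases hj
      exact G.acyc i j' hs
  start := G.start

theorem valAux_map (f : α → β) (G : SLP α) (i : Fin G.n) :
    (G.map f).valAux i = (G.valAux i).map f := by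
  induction i using G.acyc_induction with
  | h i ih =>
    rw [valAux_eq (G.map f) i, valAux_eq, List.map_flatMap]
    refine (List.flatMap_map ..).trans (List.flatMap_congr fun s hs => ?_)
    rcases s with a | j
    · rfl
    · exact ih j hs

theorem val_map (f : α → β) (G : SLP α) : (G.map f).val = G.val.map f :=
  G.valAux_map f G.start

theorem size_map (f : α → β) (G : SLP α) : (G.map f).size = G.size := by
  change ∑ i : Fin G.n, ((G.rhs i).map _).length = _
  simp [size]

def fillHoles (G : SLP (Option α)) (H : SLP α) : SLP α where
  n := H.n + G.n
  rhs := Fin.addCases (fun i => (H.rhs i).map (Sum.map id (Fin.castAdd G.n)))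
    (fun j => (G.rhs j).map
      (Sum.elim (Option.elim · (.inr (Fin.castAdd G.n H.start)) .inl) (.inr ∘ Fin.natAdd H.n)))
  rhs_ne := Fin.addCases (by simpa using H.rhs_ne) (by simpa using G.rhs_ne)
  acyc := by
    refine Fin.addCases (fun i j h => ?_) (fun i j h => ?_)
    · simp only [Fin.addCases_left, List.mem_map] at h
      obtain ⟨a | j', hs, hj⟩ := h
      · simp at hj
      · cases hj
        exact H.acyc i j' hs
    · simp only [Fin.addCases_right, List.mem_map] at h
      obtain ⟨(_ | a) | j', hs, hj⟩ := h
      · cases hj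
        simpa using Nat.lt_add_right _ H.start.isLt
      · simp at hj
      · cases hj
        simpa using G.acyc i j' hs
  start := Fin.natAdd H.n G.start

theorem rhs_fillHoles_castAdd (G : SLP (Option α)) (H : SLP α) (i : Fin H.n) :
    (G.fillHoles H).rhs (Fin.castAdd G.n i) = (H.rhs i).map (Sum.map id (Fin.castAdd G.n)) := by
  simp only [fillHoles, Fin.addCases_left]

theorem rhs_fillHoles_natAdd (G : SLP (Option α)) (H : SLP α) (i : Fin G.n) :
    (G.fillHoles H).rhs (Fin.natAdd H.n i) = (G.rhs i).map
      (Sum.elim (Option.elim · (.inr (Fin.castAdd G.n H.start)) .inl)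
        (.inr ∘ Fin.natAdd H.n)) := by
  simp only [fillHoles, Fin.addCases_right]

theorem valAux_fillHoles_castAdd (G : SLP (Option α)) (H : SLP α) (i : Fin H.n) :
    (G.fillHoles H).valAux (Fin.castAdd G.n i) = H.valAux i := by
  induction i using H.acyc_induction with
  | h i ih =>
    rw [valAux_eq (G.fillHoles H) (Fin.castAdd G.n i), valAux_eq, rhs_fillHoles_castAdd]
    refine (List.flatMap_map ..).trans (List.flatMap_congr fun s hs => ?_)
    rcases s with a | j
    · rfl
    · exact ih j hs

theorem valAux_fillHoles_natAdd (G : SLP (Option α)) (H : SLP α) (i : Fin G.n) :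
    (G.fillHoles H).valAux (Fin.natAdd H.n i) = (G.valAux i).fillHoles H.val := by
  induction i using G.acyc_induction with
  | h i ih =>
    rw [valAux_eq (G.fillHoles H) (Fin.natAdd H.n i), valAux_eq, List.fillHoles,
      List.flatMap_assoc, rhs_fillHoles_natAdd]
    refine (List.flatMap_map ..).trans (List.flatMap_congr fun s hs => ?_)
    rcases s with (_ | a) | j
    · exact (valAux_fillHoles_castAdd G H H.start).trans (by simp [val])
    · rfl
    · exact ih j hs

theorem val_fillHoles (G : SLP (Option α)) (H : SLP α) :
    (G.fillHoles H).val = G.val.fillHoles H.val :=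
  valAux_fillHoles_natAdd G H G.start

theorem size_fillHoles (G : SLP (Option α)) (H : SLP α) :
    (G.fillHoles H).size = H.size + G.size := by
  change ∑ i : Fin (H.n + G.n), _ = _
  simp [size, fillHoles, Fin.sum_univ_add]

end SLP

section Complexity

variable {α β : Type}

theorem g_le_size (G : SLP α) : g G.val ≤ G.size :=
  Nat.sInf_le ⟨G, rfl, rfl⟩

theorem exists_minimal_slp {w : List α} (hw : w ≠ []) :
    ∃ G : SLP α, G.val = w ∧ G.size = g w := by
  obtain ⟨G, hsize, hval⟩ := Nat.sInf_mem (s := {s | ∃ G : SLP α, G.size = s ∧ G.val = w})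
    ⟨_, SLP.ofWord w hw, rfl, SLP.val_ofWord w hw⟩
  exact ⟨G, hval, hsize⟩

@[simp]
theorem g_nil : g ([] : List α) = 0 :=
  Nat.sInf_eq_zero.2 <| .inr <| Set.eq_empty_of_forall_notMem fun _ ⟨G, _, hG⟩ =>
    G.valAux_ne_nil G.start hG

theorem g_le_length (w : List α) : g w ≤ w.length := by
  rcases eq_or_ne w [] with rfl | hw
  · simp
  · simpa [SLP.val_ofWord, SLP.size_ofWord] using g_le_size (SLP.ofWord w hw)

theorem g_map_le (f : α → β) (w : List α) : g (w.map f) ≤ g w := by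
  rcases eq_or_ne w [] with rfl | hw
  · simp
  · obtain ⟨G, rfl, hG⟩ := exists_minimal_slp hw
    simpa [SLP.val_map, SLP.size_map, hG] using g_le_size (G.map f)

theorem g_fillHoles_le (v : List (Option α)) {u : List α} (hu : u ≠ []) :
    g (v.fillHoles u) ≤ g v + g u := by
  rcases eq_or_ne v [] with rfl | hv
  · simp [List.fillHoles]
  · obtain ⟨G, rfl, hG⟩ := exists_minimal_slp hv
    obtain ⟨H, rfl, hH⟩ := exists_minimal_slp hu
    simpa [SLP.val_fillHoles, SLP.size_fillHoles, hG, hH, add_comm] using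
      g_le_size (G.fillHoles H)

theorem g_cons_le (a : α) (w : List α) : g (a :: w) ≤ g w + 2 := by
  rcases eq_or_ne w [] with rfl | hw
  · simpa using (g_le_length [a]).trans (by norm_num)
  · have : a :: w = [some a, none].fillHoles w := by simp [List.fillHoles]
    grw [this, g_fillHoles_le _ hw, g_le_length [some a, none]]
    simp [add_comm]

theorem g_append_le (u w : List α) : g (u ++ w) ≤ g u + g w + 2 := by
  rcases eq_or_ne u [] with rfl | hu
  · simp
  rcases eq_or_ne w [] with rfl | hw
  · simp
  have hw' : u ++ w = (u.map some ++ [none]).fillHoles w := by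
    simp [List.fillHoles, List.flatMap_map]
  have hu' : u.map some ++ [none] = [none, some none].fillHoles (u.map some) := by
    simp [List.fillHoles]
  calc g (u ++ w) ≤ g (u.map some ++ [none]) + g w := hw' ▸ g_fillHoles_le _ hw
    _ ≤ 2 + g (u.map some) + g w := by
      grw [hu', g_fillHoles_le _ (by simpa using hu), g_le_length [none, some none]]; rfl
    _ ≤ g u + g w + 2 := by grw [g_map_le]; omega

theorem g_replicate_le (n : ℕ) (a : α) : g (List.replicate n a) ≤ 3 * Nat.log 2 n + 1 := by
  induction n using Nat.strong_induction_on with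
  | _ n ih =>
    rcases lt_or_ge n 2 with hn | hn
    · interval_cases n
      · simp
      · simpa using g_le_length [a]
    have hsplit : List.replicate n a =
        (none :: none :: List.replicate (n % 2) (some a)).fillHoles (List.replicate (n / 2) a) := by
      simp only [List.fillHoles, List.flatMap_cons, List.flatMap_replicate, Option.elim_none,
        Option.elim_some, List.pure_def, List.flatten_replicate_singleton, ← List.replicate_add]
      congr 1
      omega
    have hlog : Nat.log 2 n = Nat.log 2 (n / 2) + 1 := by
      have := Nat.log_pos (b := 2) (by norm_num) hn
      rw [Nat.log_div_base]
      omega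
    calc g (List.replicate n a)
        ≤ (2 + n % 2) + g (List.replicate (n / 2) a) := by
          grw [hsplit, g_fillHoles_le _ (by simp; omega), g_le_length (none :: none :: _)]
          simp
          omega
      _ ≤ 3 * Nat.log 2 n + 1 := by
          grw [ih (n / 2) (by omega)]; omega

theorem g_flatten_replicate_le (n : ℕ) (w : List α) :
    g (List.replicate n w).flatten ≤ g w + 3 * Nat.log 2 n + 1 := by
  rcases eq_or_ne w [] with rfl | hw
  · simp
  have : (List.replicate n w).flatten = (List.replicate n none).fillHoles w := by
    simp [List.fillHoles, List.flatMap_replicate]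
  grw [this, g_fillHoles_le _ hw, g_replicate_le]
  omega

end Complexity

section JoinWithSep

variable {β : Type}

def joinWithSep (f : ℕ → List β) (t : List β) (d : ℕ) : List β :=
  ((List.range d).map fun j => f j ++ t).flatten ++ f d

@[simp]
theorem joinWithSep_zero (f : ℕ → List β) (t : List β) : joinWithSep f t 0 = f 0 := by
  simp [joinWithSep]

theorem joinWithSep_succ (f : ℕ → List β) (t : List β) (d : ℕ) :
    joinWithSep f t (d + 1) = joinWithSep f t d ++ t ++ f (d + 1) := by
  simp [joinWithSep, List.range_succ]

theorem joinWithSep_congr {f f' : ℕ → List β} (t : List β) {d : ℕ}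
    (h : ∀ j ≤ d, f j = f' j) :
    joinWithSep f t d = joinWithSep f' t d := by
  unfold joinWithSep
  rw [h d le_rfl, List.map_congr_left fun j hj => by rw [h j (List.mem_range.1 hj).le]]

theorem joinWithSep_cons (x : β) (f : ℕ → List β) (t : List β) (d : ℕ) :
    joinWithSep (fun j => x :: f j) t d = x :: joinWithSep f (t ++ [x]) d := by
  induction d with
  | zero => simp
  | succ d ih => simp [joinWithSep_succ, ih]

theorem joinWithSep_add (f : ℕ → List β) (t : List β) (a b : ℕ) :
    joinWithSep f t (a + 1 + b) =
      joinWithSep f t a ++ t ++ joinWithSep (fun j => f (a + 1 + j)) t b := by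
  induction b with
  | zero => simp [joinWithSep_succ]
  | succ b ih => simp [← add_assoc, joinWithSep_succ, ih]

theorem flatMap_joinWithSep {γ : Type} (f : ℕ → List β) (t : List β) (d : ℕ)
    (h : β → List γ) :
    (joinWithSep f t d).flatMap h = joinWithSep (fun j => (f j).flatMap h) (t.flatMap h) d := by
  induction d with
  | zero => simp
  | succ d ih => simp [joinWithSep_succ, ih]

end JoinWithSep

theorem binpad_succ (L j : ℕ) :
    binpad (L + 1) j = (if j.testBit L then 1 else 0) :: binpad L j := by
  simp only [binpad, List.range_succ_eq_map, List.map_cons, List.map_map]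
  congr 1
  refine List.map_congr_left fun t ht => ?_
  simp only [Function.comp_apply]
  congr 3
  omega

theorem binpad_two_pow_add (L j : ℕ) : binpad L (2 ^ L + j) = binpad L j := by
  refine List.map_congr_left fun t ht => ?_
  rw [Nat.testBit_two_pow_add_gt (by simp at ht; omega)]

def counter (L d : ℕ) (t : List (Option (Fin 3))) : List (Option (Fin 3)) :=
  joinWithSep (fun j => (binpad L j).map some) t d

theorem counter_succ_of_lt {L d : ℕ} (hd : d < 2 ^ L) (t : List (Option (Fin 3))) :
    counter (L + 1) d t = some 0 :: counter L d (t ++ [some 0]) := by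
  rw [counter, counter, ← joinWithSep_cons]
  refine joinWithSep_congr t fun j hj => ?_
  rw [binpad_succ, Nat.testBit_lt_two_pow (by omega)]
  rfl

theorem counter_succ_of_le {L d : ℕ} (h₁ : 2 ^ L ≤ d) (h₂ : d < 2 ^ (L + 1))
    (t : List (Option (Fin 3))) :
    counter (L + 1) d t = (some 0 :: counter L (2 ^ L - 1) (t ++ [some 0])) ++ t ++
      (some 1 :: counter L (d - 2 ^ L) (t ++ [some 1])) := by
  have hd : d = 2 ^ L - 1 + 1 + (d - 2 ^ L) := by have := Nat.one_le_two_pow (n := L); omega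
  rw [← counter_succ_of_lt (by omega)]
  conv_lhs => rw [counter, hd, joinWithSep_add, ← counter]
  congr 1
  rw [counter, ← joinWithSep_cons]
  refine joinWithSep_congr _ fun j hj => ?_
  have hj' : j < 2 ^ L := by rw [pow_succ] at h₂; omega
  rw [Nat.sub_add_cancel Nat.one_le_two_pow, binpad_succ, Nat.testBit_two_pow_add_eq,
    Nat.testBit_lt_two_pow hj', binpad_two_pow_add]
  rfl

theorem counter_eq_fillHoles (L d : ℕ) (t : List (Option (Fin 3))) :
    counter L d t = ((counter L d [none]).map (Option.map some)).fillHoles t := by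
  simp [List.fillHoles, List.flatMap_map, counter, flatMap_joinWithSep, ← List.map_eq_flatMap]

theorem uk_eq_fillHoles (k : ℕ) :
    uk k = (counter (Nat.clog 2 k) (k - 1) [none]).fillHoles (List.replicate (mk' k) 2) := by
  simp [List.fillHoles, counter, flatMap_joinWithSep, List.flatMap_map]
  rfl

theorem g_counter_snoc_le (L d : ℕ) (x : Option (Fin 3)) :
    g (counter L d [none, x]) ≤ g (counter L d [none]) + 2 := by
  grw [counter_eq_fillHoles, g_fillHoles_le _ (List.cons_ne_nil _ _), g_map_le,
    g_le_length [none, x]]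
  rfl

theorem g_counter_succ_le_of_lt {L d : ℕ} (hd : d < 2 ^ L) :
    g (counter (L + 1) d [none]) ≤ g (counter L d [none]) + 4 := by
  rw [counter_succ_of_lt hd, List.singleton_append]
  grw [g_cons_le, g_counter_snoc_le]

theorem g_counter_succ_le_of_le {L d : ℕ} (h₁ : 2 ^ L ≤ d) (h₂ : d < 2 ^ (L + 1)) :
    g (counter (L + 1) d [none]) ≤
      g (counter L (2 ^ L - 1) [none]) + g (counter L (d - 2 ^ L) [none]) + 13 := by
  rw [counter_succ_of_le h₁ h₂, List.singleton_append, List.singleton_append]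
  grw [g_append_le (_ ++ _), g_append_le (_ :: _) [none], g_cons_le (some 0), g_cons_le (some 1),
    g_counter_snoc_le, g_counter_snoc_le, g_le_length [none]]
  simp only [List.length_singleton]
  omega

theorem g_counter_full_add_le (L : ℕ) : g (counter L (2 ^ L - 1) [none]) + 13 ≤ 13 * 2 ^ L := by
  induction L with
  | zero => simp [counter, binpad]
  | succ L ih =>
    have h : 2 ^ (L + 1) = 2 * 2 ^ L := by ring
    have hpos := Nat.one_le_two_pow (n := L)
    grw [g_counter_succ_le_of_le (by omega) (by omega),
      show 2 ^ (L + 1) - 1 - 2 ^ L = 2 ^ L - 1 by omega]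
    omega

theorem g_counter_le {L d : ℕ} (hd : d < 2 ^ L) :
    g (counter L d [none]) ≤ 13 * (d + 1) + 4 * L := by
  induction L generalizing d with
  | zero => simp [show d = 0 by simpa using hd, counter, binpad]
  | succ L ih =>
    rcases lt_or_ge d (2 ^ L) with hlt | hge
    · grw [g_counter_succ_le_of_lt hlt, ih hlt]
      omega
    · have h : 2 ^ (L + 1) = 2 * 2 ^ L := by ring
      grw [g_counter_succ_le_of_le hge hd, ih (d := d - 2 ^ L) (by omega)]
      have := g_counter_full_add_le L
      omega

theorem one_le_mk' {k : ℕ} (hk : 2 ≤ k) (hk3 : k ≠ 3) : 1 ≤ mk' k := by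
  rcases lt_or_ge k 9 with hk9 | hk9
  · interval_cases k <;> first | decide | contradiction
  have hL : 3 < Nat.clog 2 k := (Nat.lt_clog_iff_pow_lt one_lt_two).2 (by omega)
  have hkL : 2 ^ (Nat.clog 2 k - 1) < k := Nat.pow_pred_clog_lt_self one_lt_two (by omega)
  rw [mk']
  generalize Nat.clog 2 k = L at *
  -- `k > 2 ^ (L - 1) ≥ 4 (L - 2) ≥ 2 L`, hence `L < 2 ^ L ≤ 2 ^ (k - L)`
  have h₁ : 2 ^ (L - 1) = 4 * 2 ^ (L - 3) := by
    rw [show L - 1 = L - 3 + 2 by omega, pow_add]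
    ring
  have h₂ : L - 3 < 2 ^ (L - 3) := Nat.lt_two_pow_self
  have h₃ : L < 2 ^ L := Nat.lt_two_pow_self
  have h₄ : 2 ^ L ≤ 2 ^ (k - L) := Nat.pow_le_pow_right two_pos (by omega)
  omega

theorem g_sk_le {k : ℕ} (hk : 2 ≤ k) (hm : 1 ≤ mk' k) : g (sk k) ≤ 48 * k := by
  have hL : 1 ≤ Nat.clog 2 k := Nat.clog_pos one_lt_two hk
  have hLk : Nat.clog 2 k ≤ k := Nat.clog_le_of_le_pow Nat.lt_two_pow_self.le
  have hmk : mk' k + 1 < 2 ^ k := by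
    have : 2 ^ (k - Nat.clog 2 k) < 2 ^ k := Nat.pow_lt_pow_right one_lt_two (by omega)
    have : mk' k = 2 ^ (k - Nat.clog 2 k) - Nat.clog 2 k := rfl
    omega
  have hlog₁ : Nat.log 2 (mk' k) < k := Nat.log_lt_of_lt_pow' (by omega) (by omega)
  have hlog₂ : Nat.log 2 (mk' k + 1) < k := Nat.log_lt_of_lt_pow' (by omega) hmk
  have huk : g (uk k) ≤ 20 * k := by
    grw [uk_eq_fillHoles, g_fillHoles_le _ (by simp; omega), g_counter_le (d := k - 1)
      ((Nat.sub_lt (by omega) one_pos).trans_le (Nat.le_pow_clog one_lt_two k)), g_replicate_le]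
    omega
  have hblock : g (uk k ++ List.replicate (mk' k + 1) 2) ≤ 23 * k := by
    grw [g_append_le, huk, g_replicate_le]
    omega
  unfold sk
  grw [g_append_le, g_flatten_replicate_le, hblock, huk]
  omega

/-- There is an absolute constant `C` with `g(s_k) ≤ C·k` for all `k ≥ 2`. -/
theorem g_sk_linear : ∃ C : ℕ, ∀ k : ℕ, 2 ≤ k → g (sk k) ≤ C * k := by
  refine ⟨48, fun k hk => ?_⟩
  rcases eq_or_ne k 3 with rfl | hk3
  -- `m_3 = 0`, so the holes would be filled with the empty word; but `s_3` has length 6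
  · exact (g_le_length _).trans (by decide)
  · exact g_sk_le hk (one_le_mk' hk hk3)
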